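/- arXiv:2406.00688 — 2 statements merged into one kernel-verified Lean document; each statement's English description precedes it below -/
import Mathlib

section
/- Let p(x1,…,xt) be a nonzero polynomial in t variables with nonnegative integer coefficients (so p takes positive values on positive integer arguments). Then there exists an M-triple G of dimension t such that the map (n1,…,nt) ↦ p(n1,…,nt) from ℤ₊^t to ℤ₊ is computable by G. -/
def IsUpperTriangular {α : Type} [LinearOrder α] (g : Monoid.End (FreeMonoid α)) : Prop :=
  ∀ x y : α, y < x → y ∉ FreeMonoid.toList (g (FreeMonoid.of x))

structure MTriple (t : ℕ) (α : Type) [Fintype α] [LinearOrder α] where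
  g1 : Monoid.End (FreeMonoid α)
  g2 : Monoid.End (FreeMonoid α)
  lvl : α → ℕ
  lvl_mono : Monotone lvl
  lvl_le : ∀ x, lvl x ≤ t
  lvl_surj : ∀ i : ℕ, i ≤ t → ∃ x, lvl x = i
  tri_g1 : IsUpperTriangular g1
  tri_g2 : IsUpperTriangular g2
  last : α
  last_top : ∀ x, x ≤ last
  lvl_last : ∀ x, lvl x = t ↔ x = last
  g1_lvl : ∀ x : α, ∀ y ∈ FreeMonoid.toList (g1 (FreeMonoid.of x)), lvl y = lvl x
  g2_lvl : ∀ x : α, lvl x < t → ∀ y ∈ FreeMonoid.toList (g2 (FreeMonoid.of x)), lvl y = lvl x + 1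
  g2_sq : ∀ x : α, g2 (g2 (FreeMonoid.of x)) = 1
  g1_last : g1 (FreeMonoid.of last) = 1
  g2_last : g2 (FreeMonoid.of last) = 1

def ComputableBy {t : ℕ} {α : Type} [Fintype α] [LinearOrder α] (T : MTriple t α)
    (f : (Fin t → ℕ) → ℕ) : Prop :=
  ∃ w : FreeMonoid α, (∀ y ∈ FreeMonoid.toList w, T.lvl y = 0) ∧
    ∀ n : Fin t → ℕ, (∀ i, 0 < n i) →
      (List.finRange t).foldl (fun u i => T.g2 ((T.g1 ^ n i) u)) w =
        FreeMonoid.of T.last ^ f n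

/-! Write `p (m + 1)` as a sum, over a list `L` of exponent vectors `j`, of products
`∏ i, C(m i, j i)`; this is possible with coefficients in `ℕ` because
`(m + 1) C(m, a) = (a + 1) C(m, a) + (a + 1) C(m, a + 1)`.

For every term `r` and level `i < t` the alphabet contains a chain `c₀ < c₁ < ⋯`.
With `a = (L[r]) i`, `g1` acts by `c₀ ↦ c₁` and `c_l ↦ c_l c_{l+1}` for `1 ≤ l ≤ a`, fixing
the other positions, so `g1ⁿ c₀` contains `c_{a+1}` exactly `C(n - 1, a)` times. `g2` sends
`c_{a+1}` to `c₀` of the same term one level up (to `e` from the top level) and erases every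
other letter; `g2² = ε` because the exit `c_{a+1}` is never a `c₀`. Starting from the product
of the level-`0` letters `c₀`, round `i` multiplies the number of copies belonging to term `r`
by `C(nᵢ - 1, (L[r]) i)`, so in the end `e` occurs `∑ r, ∏ i, C(nᵢ - 1, (L[r]) i) = p n`
times. Ordering the letters lexicographically by (level, term, position), with `e` on top,
makes `g1` and `g2` upper triangular; finally the alphabet is replaced by the isomorphic
linear order `Fin m`. -/

open FreeMonoid

theorem Monoid.End.pow_succ_apply {M : Type*} [Monoid M] (g : Monoid.End M) (n : ℕ) (x : M) :
    (g ^ (n + 1)) x = (g ^ n) (g x) := by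
  rw [pow_succ]; rfl

theorem List.prod_map_pow_eq_pow_sum {ι M : Type*} [Monoid M] (l : List ι) (f : ι → ℕ)
    (a : M) : (l.map fun i => a ^ f i).prod = a ^ (l.map f).sum := by
  induction l with
  | nil => simp
  | cons i l ih => simp [ih, pow_add]

theorem List.foldl_finRange_of_step {β : Type*} {t : ℕ} (f : β → Fin t → β)
    (W : ℕ → β) (h : ∀ i : Fin t, f (W i) i = W (i + 1)) :
    (List.finRange t).foldl f (W 0) = W t := by
  rw [← Fin.foldl_eq_foldl_finRange]
  induction t with
  | zero => rfl
  | succ t ih =>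
    rw [Fin.foldl_succ_last, ih _ fun i => h i.castSucc]
    simpa using h (Fin.last t)

namespace FreeMonoid

variable {α β : Type*}

def conjEnd (e : α ≃ β) (g : Monoid.End (FreeMonoid α)) : Monoid.End (FreeMonoid β) :=
  (map e).comp (g.comp (map e.symm))

theorem conjEnd_apply (e : α ≃ β) (g : Monoid.End (FreeMonoid α)) (w : FreeMonoid β) :
    conjEnd e g w = map e (g (map e.symm w)) := rfl

theorem conjEnd_map (e : α ≃ β) (g : Monoid.End (FreeMonoid α)) (w : FreeMonoid α) :
    conjEnd e g (map e w) = map e (g w) := by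
  rw [conjEnd_apply, map_symm_apply_map_eq]

theorem conjEnd_pow_map (e : α ≃ β) (g : Monoid.End (FreeMonoid α)) (n : ℕ)
    (w : FreeMonoid α) : (conjEnd e g ^ n) (map e w) = map e ((g ^ n) w) := by
  simp only [Monoid.End.coe_pow]
  exact (Function.Semiconj.iterate_right (fun w => (conjEnd_map e g w).symm) n w).symm

theorem mem_toList_conjEnd_of {e : α ≃ β} {g : Monoid.End (FreeMonoid α)} {x y : β} :
    y ∈ toList (conjEnd e g (of x)) ↔ e.symm y ∈ toList (g (of (e.symm x))) := by
  simp only [conjEnd_apply, map_of, toList_map, List.mem_map]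
  exact ⟨fun ⟨a, ha, hay⟩ => hay ▸ (e.symm_apply_apply a).symm ▸ ha,
    fun h => ⟨_, h, e.apply_symm_apply y⟩⟩

end FreeMonoid

theorem isUpperTriangular_lift {α : Type} [LinearOrder α] {f : α → FreeMonoid α}
    (hf : ∀ x, ∀ y ∈ toList (f x), x ≤ y) : IsUpperTriangular (lift f) :=
  fun x y hyx hy => (hf x y hy).not_gt hyx

theorem isUpperTriangular_conjEnd {α β : Type} [LinearOrder α] [LinearOrder β] (e : α ≃o β)
    {g : Monoid.End (FreeMonoid α)} (hg : IsUpperTriangular g) :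
    IsUpperTriangular (conjEnd e.toEquiv g) := fun _ _ hyx hy =>
  hg _ _ (e.symm.strictMono hyx) (mem_toList_conjEnd_of.mp hy)

section BinomialBasis

open MvPolynomial

theorem Nat.add_one_mul_choose_eq_add (m a : ℕ) :
    (m + 1) * m.choose a = (a + 1) * m.choose a + (a + 1) * m.choose (a + 1) := by
  rw [Nat.add_one_mul_choose_eq, Nat.choose_succ_succ']
  ring

theorem MvPolynomial.eval_one_ne_zero {σ : Type*} {p : MvPolynomial σ ℕ} (hp : p ≠ 0) :
    eval 1 p ≠ 0 := by
  obtain ⟨d, hd⟩ := exists_coeff_ne_zero hp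
  rw [eval_eq]
  simp only [Pi.one_apply, one_pow, Finset.prod_const_one, mul_one]
  exact fun h => hd (Finset.sum_eq_zero_iff.mp h d (mem_support_iff.mpr hd))

variable {σ : Type*} [Fintype σ] [DecidableEq σ]

theorem prod_choose_mul_add_one (m j : σ → ℕ) (i : σ) :
    (∏ s, (m s).choose (j s)) * (m i + 1) =
      (j i + 1) * ∏ s, (m s).choose (j s) +
        (j i + 1) * ∏ s, (m s).choose (Function.update j i (j i + 1) s) := by
  have hrest : ∏ s ∈ Finset.univ.erase i, (m s).choose (Function.update j i (j i + 1) s) =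
      ∏ s ∈ Finset.univ.erase i, (m s).choose (j s) :=
    Finset.prod_congr rfl fun s hs => by rw [Function.update_of_ne (Finset.ne_of_mem_erase hs)]
  rw [← Finset.mul_prod_erase _ _ (Finset.mem_univ i),
    ← Finset.mul_prod_erase _ (fun s => (m s).choose (Function.update j i (j i + 1) s))
      (Finset.mem_univ i), hrest, Function.update_self]
  linear_combination (∏ s ∈ Finset.univ.erase i, (m s).choose (j s)) *
    Nat.add_one_mul_choose_eq_add (m i) (j i)

theorem MvPolynomial.exists_eval_add_one_eq_sum_prod_choose (p : MvPolynomial σ ℕ) :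
    ∃ L : List (σ → ℕ), ∀ m : σ → ℕ,
      eval (fun i => m i + 1) p = (L.map fun j => ∏ i, (m i).choose (j i)).sum := by
  induction p using MvPolynomial.induction_on with
  | C a => exact ⟨List.replicate a 0, fun m => by simp⟩
  | add p q hp hq =>
    obtain ⟨L₁, h₁⟩ := hp
    obtain ⟨L₂, h₂⟩ := hq
    exact ⟨L₁ ++ L₂, fun m => by simp [h₁, h₂]⟩
  | mul_X p i hp =>
    obtain ⟨L, hL⟩ := hp
    refine ⟨L.flatMap fun j => List.replicate (j i + 1) j ++
      List.replicate (j i + 1) (Function.update j i (j i + 1)), fun m => ?_⟩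
    rw [map_mul, hL, eval_X, ← List.sum_map_mul_right]
    simp [List.flatMap_def, List.map_flatten, List.sum_flatten, Function.comp_def,
      prod_choose_mul_add_one, List.sum_map_add]

end BinomialBasis

namespace MTriple

variable {t : ℕ} {α β : Type} [Fintype α] [LinearOrder α] [Fintype β] [LinearOrder β]

def congr (T : MTriple t α) (e : α ≃o β) : MTriple t β where
  g1 := conjEnd e.toEquiv T.g1
  g2 := conjEnd e.toEquiv T.g2
  lvl := T.lvl ∘ e.symm
  lvl_mono := T.lvl_mono.comp e.symm.monotone
  lvl_le _ := T.lvl_le _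
  lvl_surj i hi := let ⟨x, hx⟩ := T.lvl_surj i hi; ⟨e x, by simpa using hx⟩
  tri_g1 := isUpperTriangular_conjEnd e T.tri_g1
  tri_g2 := isUpperTriangular_conjEnd e T.tri_g2
  last := e T.last
  last_top _ := e.symm_apply_le.mp (T.last_top _)
  lvl_last _ := by simp [T.lvl_last, e.symm_apply_eq]
  g1_lvl _ _ hy := T.g1_lvl _ _ (mem_toList_conjEnd_of.mp hy)
  g2_lvl _ hx _ hy := T.g2_lvl _ hx _ (mem_toList_conjEnd_of.mp hy)
  g2_sq x := by
    rw [conjEnd_apply e.toEquiv T.g2 (of x), conjEnd_map, map_of, T.g2_sq, map_one]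
  g1_last := by simp [conjEnd_apply, T.g1_last]
  g2_last := by simp [conjEnd_apply, T.g2_last]

end MTriple

section ComputableBy

variable {t : ℕ} {α β : Type} [Fintype α] [LinearOrder α] [Fintype β] [LinearOrder β]
  {T : MTriple t α} {f : (Fin t → ℕ) → ℕ}

theorem ComputableBy.congr (h : ComputableBy T f) (e : α ≃o β) :
    ComputableBy (T.congr e) f := by
  obtain ⟨w, hw, hf⟩ := h
  refine ⟨map e w, fun y hy => ?_, fun n hn => ?_⟩
  · obtain ⟨x, hx, rfl⟩ := List.mem_map.mp hy
    simpa [MTriple.congr] using hw x hx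
  · rw [List.foldl_hom (map e) fun u i => ?_, hf n hn, map_pow, map_of]
    · rfl
    · exact (congrArg _ (conjEnd_pow_map e.toEquiv T.g1 _ u)).trans (conjEnd_map _ _ _)

theorem ComputableBy.congr_fun (h : ComputableBy T f) {f' : (Fin t → ℕ) → ℕ}
    (hf : ∀ n, (∀ i, 0 < n i) → f n = f' n) : ComputableBy T f' := by
  obtain ⟨w, hw, hT⟩ := h
  exact ⟨w, hw, fun n hn => hf n hn ▸ hT n hn⟩

theorem ComputableBy.exists_fin (h : ComputableBy T f) :
    ∃ (m : ℕ) (T' : MTriple t (Fin m)), ComputableBy T' f :=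
  ⟨_, _, h.congr (Fintype.orderIsoFinOfCardEq α rfl).symm⟩

end ComputableBy

namespace BinomChain

variable {t : ℕ} {ι : Type} [Fintype ι] (k : ι → Fin t → ℕ)

def bound : ℕ := Finset.univ.sup fun x : ι × Fin t => k x.1 x.2

theorem le_bound (r : ι) (i : Fin t) : k r i ≤ bound k :=
  Finset.le_sup (f := fun x : ι × Fin t => k x.1 x.2) (Finset.mem_univ (r, i))

-- `mk k i r l` is position `l` on the chain of term `r` at level `i`, and `⊤` is the letter `e`;
-- positions beyond `k r i + 1` are fixed by `g1`, erased by `g2` and never reached.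
abbrev Letter := WithTop (Fin t ×ₗ ι ×ₗ Fin (bound k + 2))

def mk (i : Fin t) (r : ι) (l : Fin (bound k + 2)) : Letter k := ↑(toLex (i, toLex (r, l)))

theorem eq_top_or_eq_mk (x : Letter k) : x = ⊤ ∨ ∃ i r l, x = mk k i r l := by
  induction x using WithTop.recTopCoe with
  | top => exact Or.inl rfl
  | coe a => exact Or.inr ⟨(ofLex a).1, (ofLex (ofLex a).2).1, (ofLex (ofLex a).2).2, rfl⟩

def entry (i : ℕ) (r : ι) : Letter k := if h : i < t then mk k ⟨i, h⟩ r 0 else ⊤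

def level : Letter k → ℕ
  | ⊤ => t
  | some (i, _, _) => i

def step : Letter k → FreeMonoid (Letter k)
  | ⊤ => 1
  | some (i, r, l) =>
    if h : (l : ℕ) ≤ k r i then
      (if (l : ℕ) = 0 then 1 else of (mk k i r l)) *
        of (mk k i r ⟨l + 1, by have := le_bound k r i; omega⟩)
    else of (mk k i r l)

def exit : Letter k → FreeMonoid (Letter k)
  | ⊤ => 1
  | some (i, r, l) => if (l : ℕ) = k r i + 1 then of (entry k (i + 1) r) else 1

def g1 : Monoid.End (FreeMonoid (Letter k)) := lift (step k)

def g2 : Monoid.End (FreeMonoid (Letter k)) := lift (exit k)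

def exponent (j n : Fin t → ℕ) (m : ℕ) : ℕ :=
  ∏ i ∈ Finset.univ.filter (fun i : Fin t => (i : ℕ) < m), (n i - 1).choose (j i)

noncomputable def word (n : Fin t → ℕ) (m : ℕ) : FreeMonoid (Letter k) :=
  (Finset.univ.toList.map fun r => of (entry k m r) ^ exponent (k r) n m).prod

variable {k}

theorem level_mk (i : Fin t) (r : ι) (l : Fin (bound k + 2)) : level k (mk k i r l) = i := rfl

theorem level_entry {i : ℕ} (hi : i ≤ t) (r : ι) : level k (entry k i r) = i := by
  unfold entry
  split_ifs with h
  · rfl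
  · exact (le_antisymm hi (not_lt.mp h)).symm

theorem level_le (x : Letter k) : level k x ≤ t := by
  rcases eq_top_or_eq_mk k x with rfl | ⟨i, r, l, rfl⟩
  · exact le_rfl
  · exact i.2.le

theorem level_eq_iff (x : Letter k) : level k x = t ↔ x = ⊤ := by
  rcases eq_top_or_eq_mk k x with rfl | ⟨i, r, l, rfl⟩
  · simp [level]
  · exact iff_of_false (by rw [level_mk]; exact i.2.ne) WithTop.coe_ne_top

theorem entry_fin (i : Fin t) (r : ι) : entry k i r = mk k i r 0 := dif_pos i.2

theorem step_mk (i : Fin t) (r : ι) (l : Fin (bound k + 2)) :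
    step k (mk k i r l) =
      if h : (l : ℕ) ≤ k r i then
        (if (l : ℕ) = 0 then 1 else of (mk k i r l)) *
          of (mk k i r ⟨l + 1, by have := le_bound k r i; omega⟩)
      else of (mk k i r l) := rfl

theorem exit_mk (i : Fin t) (r : ι) (l : Fin (bound k + 2)) :
    exit k (mk k i r l) = if (l : ℕ) = k r i + 1 then of (entry k (i + 1) r) else 1 := rfl

theorem exit_entry (i : ℕ) (r : ι) : exit k (entry k i r) = 1 := by
  unfold entry
  split_ifs
  · rw [exit_mk, if_neg (by simp)]
  · rfl

theorem g2_exit (x : Letter k) : g2 k (exit k x) = 1 := by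
  rcases eq_top_or_eq_mk k x with rfl | ⟨i, r, l, rfl⟩
  · rfl
  · rw [exit_mk]
    split_ifs
    · exact exit_entry _ r
    · exact map_one _

theorem g2_pow_g1_mk (i : Fin t) (r : ι) (n : ℕ) (l : Fin (bound k + 2))
    (hl₀ : 1 ≤ (l : ℕ)) (hl : (l : ℕ) ≤ k r i + 1) :
    g2 k ((g1 k ^ n) (of (mk k i r l))) = of (entry k (i + 1) r) ^ n.choose (k r i + 1 - l) := by
  induction n generalizing l with
  | zero =>
    change exit k (mk k i r l) = _
    rw [exit_mk]
    split_ifs with h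
    · rw [h, Nat.sub_self, Nat.choose_self, pow_one]
    · rw [Nat.choose_eq_zero_of_lt (by omega), pow_zero]
  | succ n ih =>
    rw [Monoid.End.pow_succ_apply]
    change g2 k ((g1 k ^ n) (step k (mk k i r l))) = _
    rw [step_mk]
    split_ifs with h h₀
    · omega
    · have hsub : k r i + 1 - l = (k r i + 1 - (l + 1)) + 1 := by omega
      rw [map_mul, map_mul, ih l hl₀ hl, ih _ (by simp) (by simp; omega), ← pow_add, hsub,
        Nat.choose_succ_succ' n, add_comm (n.choose _)]
    · rw [ih l hl₀ hl, show k r i + 1 - l = 0 by omega, Nat.choose_zero_right,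
        Nat.choose_zero_right]

theorem g2_pow_g1_entry (i : Fin t) (r : ι) {n : ℕ} (hn : 0 < n) :
    g2 k ((g1 k ^ n) (of (entry k i r))) = of (entry k (i + 1) r) ^ (n - 1).choose (k r i) := by
  obtain ⟨n, rfl⟩ := Nat.exists_eq_add_of_lt hn
  rw [zero_add, Monoid.End.pow_succ_apply, entry_fin]
  change g2 k ((g1 k ^ n) (step k (mk k i r 0))) = _
  rw [step_mk, dif_pos (by simp), if_pos (by simp), one_mul,
    g2_pow_g1_mk i r n _ (by simp) (by simp)]
  simp

theorem exponent_zero (j n : Fin t → ℕ) : exponent j n 0 = 1 := by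
  simp [exponent]

theorem exponent_succ (j n : Fin t → ℕ) (i : Fin t) :
    exponent j n (i + 1) = (n i - 1).choose (j i) * exponent j n i := by
  have hfilter : Finset.univ.filter (fun i' : Fin t => (i' : ℕ) < i + 1) =
      insert i (Finset.univ.filter fun i' : Fin t => (i' : ℕ) < i) := by
    ext i'
    simp [Fin.ext_iff]
    omega
  rw [exponent, exponent, hfilter, Finset.prod_insert (by simp)]

theorem exponent_self (j n : Fin t → ℕ) : exponent j n t = ∏ i, (n i - 1).choose (j i) := by
  rw [exponent, Finset.filter_true_of_mem fun i _ => i.2]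

theorem word_zero (n : Fin t → ℕ) :
    word k n 0 = (Finset.univ.toList.map fun r => of (entry k 0 r)).prod := by
  simp [word, exponent_zero]

theorem g2_pow_g1_word {n : Fin t → ℕ} (i : Fin t) (hn : 0 < n i) :
    g2 k ((g1 k ^ n i) (word k n i)) = word k n (i + 1) := by
  simp only [word, map_list_prod, List.map_map]
  congr 1
  refine List.map_congr_left fun r _ => ?_
  simp only [Function.comp_apply, map_pow, g2_pow_g1_entry i r hn, exponent_succ, pow_mul]

theorem word_self (n : Fin t → ℕ) :
    word k n t = of ⊤ ^ ∑ r, ∏ i, (n i - 1).choose (k r i) := by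
  have hentry : ∀ r, entry k t r = ⊤ := fun r => dif_neg (lt_irrefl t)
  simp only [word, hentry, exponent_self, List.prod_map_pow_eq_pow_sum, Finset.sum_map_toList]

section Order

variable [LinearOrder ι]

theorem level_mono : Monotone (level k) := by
  intro x y hxy
  rcases eq_top_or_eq_mk k y with rfl | ⟨i', r', l', rfl⟩
  · exact level_le x
  rcases eq_top_or_eq_mk k x with rfl | ⟨i, r, l, rfl⟩
  · exact absurd hxy (by simp [mk])
  · exact Prod.Lex.monotone_fst _ _ (WithTop.coe_le_coe.mp hxy)

theorem mk_le_mk {i : Fin t} {r : ι} {l l' : Fin (bound k + 2)} (h : l ≤ l') :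
    mk k i r l ≤ mk k i r l' := by
  simp [mk, Prod.Lex.toLex_le_toLex, h]

theorem mk_lt_entry (i : Fin t) (r : ι) (l : Fin (bound k + 2)) :
    mk k i r l < entry k (i + 1) r := by
  unfold entry
  split_ifs with h
  · simp [mk, Prod.Lex.toLex_lt_toLex, Fin.lt_def]
  · exact WithTop.coe_lt_top _

theorem mem_step {x y : Letter k} (hy : y ∈ toList (step k x)) :
    x ≤ y ∧ level k y = level k x := by
  rcases eq_top_or_eq_mk k x with rfl | ⟨i, r, l, rfl⟩
  · simp [step] at hy
  rw [step_mk] at hy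
  split_ifs at hy
  all_goals
    simp only [toList_mul, toList_one, toList_of, List.nil_append, List.singleton_append,
      List.mem_cons, List.not_mem_nil, or_false] at hy
    rcases hy with rfl | rfl <;> exact ⟨mk_le_mk (by simp [Fin.le_def]), rfl⟩

theorem mem_exit {x y : Letter k} (hy : y ∈ toList (exit k x)) :
    x < y ∧ level k y = level k x + 1 := by
  rcases eq_top_or_eq_mk k x with rfl | ⟨i, r, l, rfl⟩
  · simp [exit] at hy
  rw [exit_mk] at hy
  split_ifs at hy
  · obtain rfl := List.mem_singleton.mp hy
    exact ⟨mk_lt_entry i r l, level_entry (by omega) r⟩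
  · simp at hy

variable (k)

def triple [Nonempty ι] : MTriple t (Letter k) where
  g1 := g1 k
  g2 := g2 k
  lvl := level k
  lvl_mono := level_mono
  lvl_le := level_le
  lvl_surj i hi := let ⟨r⟩ := ‹Nonempty ι›; ⟨entry k i r, level_entry hi r⟩
  tri_g1 := isUpperTriangular_lift fun _ _ hy => (mem_step hy).1
  tri_g2 := isUpperTriangular_lift fun _ _ hy => (mem_exit hy).1.le
  last := ⊤
  last_top _ := le_top
  lvl_last := level_eq_iff
  g1_lvl _ _ hy := (mem_step hy).2
  g2_lvl _ _ _ hy := (mem_exit hy).2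
  g2_sq := g2_exit
  g1_last := rfl
  g2_last := rfl

theorem computableBy_triple [Nonempty ι] :
    ComputableBy (triple k) fun n => ∑ r, ∏ i, (n i - 1).choose (k r i) := by
  refine ⟨(Finset.univ.toList.map fun r => of (entry k 0 r)).prod, fun y hy => ?_,
    fun n hn => ?_⟩
  · simp only [toList_prod, List.map_map, List.mem_flatten, List.mem_map, Function.comp_apply,
      toList_of] at hy
    obtain ⟨_, ⟨r, -, rfl⟩, hy⟩ := hy
    rw [List.mem_singleton.mp hy]
    exact level_entry (Nat.zero_le t) r
  · rw [← word_zero n, List.foldl_finRange_of_step _ (word k n) fun i => g2_pow_g1_word i (hn i),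
      word_self]
    rfl

end Order

end BinomChain

theorem statement4_general (t : ℕ) (p : MvPolynomial (Fin t) ℕ) (hp : p ≠ 0) :
    ∃ (m : ℕ) (T : MTriple t (Fin m)),
      ComputableBy T (fun n => MvPolynomial.eval n p) := by
  obtain ⟨L, hL⟩ := MvPolynomial.exists_eval_add_one_eq_sum_prod_choose p
  have hL₀ : L ≠ [] := by
    rintro rfl
    exact MvPolynomial.eval_one_ne_zero hp (by simpa [Pi.one_def] using hL 0)
  have : Nonempty (Fin L.length) := ⟨⟨0, List.length_pos_of_ne_nil hL₀⟩⟩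
  refine (BinomChain.computableBy_triple fun r : Fin L.length => L[r]).congr_fun
    (fun n hn => ?_) |>.exists_fin
  obtain ⟨m, rfl⟩ : ∃ m : Fin t → ℕ, n = fun i => m i + 1 :=
    ⟨fun i => n i - 1, funext fun i => (Nat.sub_add_cancel (hn i)).symm⟩
  simp only [Nat.add_sub_cancel]
  rw [hL, ← Fin.sum_univ_fun_getElem]
  rfl

/-- every nonzero polynomial with nonnegative integer coefficients is
computable by an M-triple. -/
theorem statement4 (t : ℕ) (ht : 0 < t) (p : MvPolynomial (Fin t) ℕ) (hp : p ≠ 0) :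
    ∃ (m : ℕ) (T : MTriple t (Fin m)),
      ComputableBy T (fun n => MvPolynomial.eval n p) :=
  statement4_general t p hp
end

section
/- Let t ≥ 2 be an integer and let p(x1,…,xt) and q(x1,…,xt) be polynomials with nonnegative integer coefficients taking positive values on positive integer arguments. Then there exist a finite ordered alphabet D and upper triangular endomorphisms g1, g2 of the free monoid D* such that, writing H for the submonoid of End(D*) generated by g1 and g2, o for the endomorphism of D* mapping every letter to the empty word, and Prod(n1,…,nα) = g1^{n1} g2 g1^{n2} g2 ⋯ g1^{nα} g2, for all positive integers n and s the following three conditions are equivalent: (i) there exist positive integers n3,…,nt with p(n,s,n3,…,nt) = q(n,s,n3,…,nt); (ii) there exists h ∈ H with g2² Prod(n,s) h = g2³ Prod(n,s) h ≠ o; (iii) there exist h1, h2 ∈ H with g2² Prod(n,s) h1 = g2³ Prod(n,s) h2 ≠ o. -/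
/-- The endomorphism `o` mapping every letter (hence every word) to the empty word. -/
def oEnd (α : Type) : Monoid.End (FreeMonoid α) :=
  { toFun := fun _ => 1
    map_one' := rfl
    map_mul' := fun _ _ => (one_mul (1 : FreeMonoid α)).symm }

/-!
The endomorphisms `g₁`, `g₂` run, in parallel for `p` and for `q`, a counter automaton reading
the arguments `m₁, m₂, …` from the word `Prod(m₁, m₂, …) = g₁^m₁ g₂ g₁^m₂ g₂ ⋯`: `g₁` increments
the current argument, `g₂` stores it and moves on to the next one. The simulation takes place on
Parikh vectors, on which `g₁` and `g₂` act linearly. While the argument `i` holds the value `x`,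
a monomial `c ∏ X_k ^ d_k` is represented by `c ∏_{k < i} m_k ^ d_k · x ^ e` copies of a letter
for each `e ≤ d_i`; `g₁` turns `x` into `x + 1` by the binomial theorem, and `g₂` keeps only the
copies with `e = d_i`. After the last argument the seeds of `p` and `q` have become the words
`accept ^ p(m)` and `accept ^ q(m)`.

The letter `start` separates the two simulations: `g₂²` maps it to `marker · seed_p`, `g₂³` to
`marker · seed_q`, and `g₂³ = g₂²` on every other letter. So if `p(m) = q(m)`, then
`h = Prod(m₃, …, m_t)` solves `g₂² Prod(n,s) h = g₂³ Prod(n,s) h`. Conversely, the two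
simulations use distinct letters, and two consecutive `g₂` send a simulation to `dead` letters,
so `g₂² Prod(n,s) h₁ = g₂³ Prod(n,s) h₂` forces `h₁` and `h₂` to complete both simulations, with
`p(m) = q(m')`; comparing the images of `seed_q` gives `q(m) = q(m')`.
-/

namespace FreeMonoid

variable {α : Type*}

def parikh (w : FreeMonoid α) : Multiset α := w.toList

@[simp] lemma parikh_one : parikh (1 : FreeMonoid α) = 0 := rfl

@[simp] lemma parikh_of (a : α) : parikh (of a) = {a} := rfl

@[simp] lemma parikh_mul (u v : FreeMonoid α) : parikh (u * v) = parikh u + parikh v := by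
  simp [parikh]

lemma ofList_replicate (n : ℕ) (a : α) : ofList (List.replicate n a) = of a ^ n := by
  induction n with
  | zero => rfl
  | succ n ih => rw [List.replicate_succ', ofList_append, ih, pow_succ]; rfl

lemma eq_pow_of_parikh_eq {w : FreeMonoid α} {a : α} {n : ℕ} (h : parikh w = n • {a}) :
    w = of a ^ n := by
  rw [Multiset.nsmul_singleton, parikh, ← Multiset.coe_replicate, Multiset.coe_eq_coe,
    List.perm_replicate] at h
  rw [← ofList_replicate, ← h, ofList_toList]

noncomputable def ofMultiset (m : Multiset α) : FreeMonoid α := ofList m.toList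

@[simp] lemma parikh_ofMultiset (m : Multiset α) : parikh (ofMultiset m) = m :=
  Multiset.coe_toList m

lemma mem_toList_ofMultiset {a : α} {m : Multiset α} : a ∈ (ofMultiset m).toList ↔ a ∈ m :=
  Multiset.mem_toList

def parikhMap (g : Monoid.End (FreeMonoid α)) : Multiset α →+ Multiset α where
  toFun m := m.bind fun a => parikh (g (of a))
  map_zero' := Multiset.zero_bind _
  map_add' m m' := Multiset.add_bind m m' _

@[simp] lemma parikhMap_singleton (g : Monoid.End (FreeMonoid α)) (a : α) :
    parikhMap g {a} = parikh (g (of a)) :=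
  Multiset.singleton_bind _ _

lemma parikh_apply (g : Monoid.End (FreeMonoid α)) (w : FreeMonoid α) :
    parikh (g w) = parikhMap g (parikh w) := by
  induction w using FreeMonoid.inductionOn' with
  | one => simp
  | of_mul a w ih =>
    rw [map_mul, parikh_mul, parikh_mul, map_add, ih, parikh_of, parikhMap_singleton]

lemma end_ext {f g : Monoid.End (FreeMonoid α)} (h : ∀ a, f (of a) = g (of a)) : f = g :=
  hom_eq h

def endCongr {β : Type*} (e : α ≃ β) : Monoid.End (FreeMonoid α) ≃* Monoid.End (FreeMonoid β) :=
  let E := freeMonoidCongr e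
  { toFun f :=
      { toFun w := E (f (E.symm w))
        map_one' := by simp
        map_mul' u v := by simp }
    invFun f :=
      { toFun w := E.symm (f (E w))
        map_one' := by simp
        map_mul' u v := by simp }
    left_inv f := by ext w; change E.symm (E (f (E.symm (E w)))) = f w; simp
    right_inv f := by ext w; change E (E.symm (f (E (E.symm w)))) = f w; simp
    map_mul' f g := by
      ext w
      change E (f (g (E.symm w))) = E (f (E.symm (E (g (E.symm w)))))
      simp }

lemma endCongr_apply_of {β : Type*} (e : α ≃ β) (f : Monoid.End (FreeMonoid α)) (b : β) :
    endCongr e f (of b) = map e (f (of (e.symm b))) := rfl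

lemma oEnd_apply {α : Type} (w : FreeMonoid α) : oEnd α w = 1 := rfl

lemma endCongr_oEnd {α β : Type} (e : α ≃ β) : endCongr e (oEnd α) = oEnd β := by
  ext
  rfl

end FreeMonoid

def IsUpperTriangularBy {α β : Type*} [Preorder β] (r : α → β) (g : Monoid.End (FreeMonoid α)) :
    Prop :=
  ∀ a x, x ∈ (g (FreeMonoid.of a)).toList → x = a ∨ r a < r x

theorem exists_equiv_fin_of_rank {α β : Type*} [Finite α] [LinearOrder β] (r : α → β) :
    ∃ (k : ℕ) (e : α ≃ Fin k), ∀ a b, r a < r b → e a < e b := by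
  have := Fintype.ofFinite α
  let e₀ := Fintype.equivFin α
  -- break the ties of `r` by an arbitrary enumeration
  let _ : LinearOrder α := LinearOrder.lift' (fun a => toLex (r a, e₀ a)) fun a b h =>
    e₀.injective (congrArg (fun x => (ofLex x).2) h)
  let φ := Fintype.orderIsoFinOfCardEq α rfl
  exact ⟨_, φ.symm.toEquiv, fun a b hab =>
    φ.symm.strictMono (show toLex (r a, e₀ a) < toLex (r b, e₀ b) from
      Prod.Lex.toLex_lt_toLex.2 (Or.inl hab))⟩

lemma IsUpperTriangularBy.endCongr {α β : Type} [LinearOrder β] {r : α → β}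
    {g : Monoid.End (FreeMonoid α)} (hg : IsUpperTriangularBy r g) {k : ℕ} {e : α ≃ Fin k}
    (he : ∀ a b, r a < r b → e a < e b) : IsUpperTriangular (FreeMonoid.endCongr e g) := by
  intro y z hzy hz
  rw [FreeMonoid.endCongr_apply_of, FreeMonoid.toList_map, List.mem_map] at hz
  obtain ⟨x, hx, rfl⟩ := hz
  rcases hg _ x hx with rfl | hlt
  · simp at hzy
  · exact (he _ _ hlt).not_gt (by simpa using hzy)

def EquationCriterion {M : Type*} [Monoid M] (A : Prop) (H : Submonoid M) (o u v : M) : Prop :=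
  (A → ∃ h ∈ H, h * u = h * v) ∧ (∀ h ∈ H, h * u ≠ o) ∧
    ∀ h₁ ∈ H, ∀ h₂ ∈ H, h₁ * u = h₂ * v → A

namespace EquationCriterion

variable {M N : Type*} [Monoid M] [Monoid N] {A : Prop} {H : Submonoid M} {o u v : M}

lemma map (hc : EquationCriterion A H o u v) (φ : M ≃* N) :
    EquationCriterion A (H.map φ) (φ o) (φ u) (φ v) := by
  obtain ⟨hsol, hne, hA⟩ := hc
  refine ⟨fun hA' => ?_, ?_, ?_⟩
  · obtain ⟨h, hH, he⟩ := hsol hA'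
    exact ⟨φ h, ⟨h, hH, rfl⟩, by rw [← map_mul, ← map_mul, he]⟩
  · rintro _ ⟨h, hH, rfl⟩ he
    exact hne h hH (φ.injective (by rwa [map_mul]))
  · rintro _ ⟨h₁, hH₁, rfl⟩ _ ⟨h₂, hH₂, rfl⟩ he
    exact hA h₁ hH₁ h₂ hH₂ (φ.injective (by rwa [map_mul, map_mul]))

lemma iff (hc : EquationCriterion A H o u v) :
    (A ↔ ∃ h ∈ H, h * u = h * v ∧ h * u ≠ o) ∧
      ((∃ h ∈ H, h * u = h * v ∧ h * u ≠ o) ↔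
        ∃ h₁ ∈ H, ∃ h₂ ∈ H, h₁ * u = h₂ * v ∧ h₁ * u ≠ o) := by
  obtain ⟨hsol, hne, hA⟩ := hc
  refine ⟨⟨fun hA' => ?_, fun ⟨h, hH, he, _⟩ => hA h hH h hH he⟩,
    ⟨fun ⟨h, hH, he, hno⟩ => ⟨h, hH, h, hH, he, hno⟩, fun ⟨h₁, hH₁, h₂, hH₂, he, _⟩ => ?_⟩⟩
  · obtain ⟨h, hH, he⟩ := hsol hA'
    exact ⟨h, hH, he, hne h hH⟩
  · obtain ⟨h, hH, he⟩ := hsol (hA h₁ hH₁ h₂ hH₂ he)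
    exact ⟨h, hH, he, hne h hH⟩

end EquationCriterion

namespace Encoding

open FreeMonoid MvPolynomial

variable {t : ℕ}

-- Variables not read yet count as `1`, so `monomialEval d (valuation v)` is the partial product.
def valuation (v : List ℕ) : Fin t → ℕ := fun i => v.getD i 1

def monomialEval (d : Fin t →₀ ℕ) (m : Fin t → ℕ) : ℕ := ∏ i, m i ^ d i

lemma eval_eq_sum_support (F : MvPolynomial (Fin t) ℕ) (m : Fin t → ℕ) :
    eval m F = ∑ j : F.support, coeff (j : Fin t →₀ ℕ) F * monomialEval j m := by
  rw [eval_eq', ← Finset.sum_coe_sort]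
  rfl

lemma valuation_pos {v : List ℕ} (hv : ∀ a ∈ v, 0 < a) (i : Fin t) : 0 < valuation v i := by
  rcases lt_or_ge (i : ℕ) v.length with h | h
  · rw [valuation, List.getD_eq_getElem _ _ h]
    exact hv _ (List.getElem_mem h)
  · rw [valuation, List.getD_eq_default _ _ h]
    exact one_pos

lemma monomialEval_pos (d : Fin t →₀ ℕ) {v : List ℕ} (hv : ∀ a ∈ v, 0 < a) :
    0 < monomialEval d (valuation v) :=
  Finset.prod_pos fun i _ => pow_pos (valuation_pos hv i) _

lemma coeff_pos {F : MvPolynomial (Fin t) ℕ} (j : F.support) : 0 < coeff (j : Fin t →₀ ℕ) F :=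
  Nat.pos_of_ne_zero (mem_support_iff.1 j.2)

lemma eval_valuation_pos {F : MvPolynomial (Fin t) ℕ} (hF : F ≠ 0) {v : List ℕ}
    (hv : ∀ a ∈ v, 0 < a) : 0 < eval (valuation v) F := by
  obtain ⟨d, hd⟩ := support_nonempty.2 hF
  rw [eval_eq_sum_support]
  exact Finset.sum_pos (fun j _ => Nat.mul_pos (coeff_pos j) (monomialEval_pos _ hv))
    ⟨⟨d, hd⟩, Finset.mem_univ _⟩

lemma valuation_append_singleton_pow (d : Fin t →₀ ℕ) (v : List ℕ) (x : ℕ) (i : Fin t) :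
    valuation (v ++ [x]) i ^ d i =
      (if (i : ℕ) = v.length then x ^ d i else 1) * valuation v i ^ d i := by
  unfold valuation
  rcases lt_trichotomy (i : ℕ) v.length with h | h | h
  · rw [if_neg h.ne, List.getD_append _ _ _ _ h, one_mul]
  · rw [if_pos h, List.getD_append_right _ _ _ _ h.ge, List.getD_eq_default _ _ h.ge, h]
    simp
  · rw [if_neg h.ne', List.getD_eq_default _ _ h.le, List.getD_eq_default _ _ (by simp; omega)]
    simp

lemma monomialEval_valuation_append_singleton (d : Fin t →₀ ℕ) {v : List ℕ} {i : Fin t}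
    (hv : v.length = i) (x : ℕ) :
    monomialEval d (valuation (v ++ [x])) = monomialEval d (valuation v) * x ^ d i := by
  unfold monomialEval
  simp_rw [valuation_append_singleton_pow, Finset.prod_mul_distrib, hv, Fin.val_inj,
    Finset.prod_ite_eq', Finset.mem_univ, if_true, mul_comm]

lemma sum_pow_mul_choose (x d k : ℕ) (hk : k ≤ d) :
    ∑ e : Fin (d + 1), x ^ (e : ℕ) * k.choose e = (x + 1) ^ k := by
  rw [Fin.sum_univ_eq_sum_range (fun e => x ^ e * k.choose e), add_pow,
    ← Finset.sum_range_add_sum_Ico _ (Nat.add_le_add_right hk 1)]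
  simp only [one_pow, mul_one, Nat.cast_id, add_eq_left]
  exact Finset.sum_eq_zero fun e he => by
    rw [Nat.choose_eq_zero_of_lt (by simp at he; omega), mul_zero]

/-- The states of the simulated automaton: `run i v x` reads the argument `i` (from `0`), whose
current value is `x`, the earlier arguments being `v`; `fresh i v` is about to read the
argument `i`; `done v` has read all arguments; `dead` has seen `g₂` twice in a row. -/
inductive State (t : ℕ)
  | run (i : Fin t) (v : List ℕ) (x : ℕ)
  | fresh (i : Fin t) (v : List ℕ)
  | done (v : List ℕ)
  | dead

namespace State

def incr : State t → State t
  | run i v x => run i v (x + 1)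
  | fresh i v => run i v 1
  | σ => σ

def advance : State t → State t
  | run i v x => if h : (i : ℕ) + 1 < t then fresh ⟨i + 1, h⟩ (v ++ [x]) else done (v ++ [x])
  | fresh _ _ => dead
  | σ => σ

def Valid : State t → Prop
  | run i v x => v.length = i ∧ (∀ a ∈ v, 0 < a) ∧ 0 < x
  | fresh i v => v.length = i ∧ ∀ a ∈ v, 0 < a
  | done v => v.length = t ∧ ∀ a ∈ v, 0 < a
  | dead => True

def Extends (u : List ℕ) : State t → Prop
  | run _ v _ | fresh _ v | done v => u <+: v
  | dead => True

lemma Valid.incr {σ : State t} (h : σ.Valid) : σ.incr.Valid := by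
  cases σ with
  | run i v x => exact ⟨h.1, h.2.1, x.succ_pos⟩
  | fresh i v => exact ⟨h.1, h.2, one_pos⟩
  | _ => exact h

lemma Valid.advance {σ : State t} (h : σ.Valid) : σ.advance.Valid := by
  cases σ with
  | run i v x =>
    obtain ⟨hlen, hv, hx⟩ := h
    have hv' : ∀ a ∈ v ++ [x], 0 < a := by simpa [or_imp, forall_and] using ⟨hv, hx⟩
    dsimp only [State.advance]
    split_ifs with hi
    · exact ⟨by simp [hlen], hv'⟩
    · exact ⟨by simp; omega, hv'⟩
  | fresh i v => trivial
  | _ => exact h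

lemma Extends.incr {u : List ℕ} {σ : State t} (h : σ.Extends u) : σ.incr.Extends u := by
  cases σ <;> exact h

lemma Extends.advance {u : List ℕ} {σ : State t} (h : σ.Extends u) : σ.advance.Extends u := by
  cases σ with
  | run i v x =>
    dsimp only [State.advance]
    split_ifs <;> exact h.trans (List.prefix_append v [x])
  | fresh i v => trivial
  | _ => exact h

end State

variable (P : Bool → MvPolynomial (Fin t) ℕ)

/-- The letters of the simulation of `P b` are indexed by a monomial `j`, a point of the
support of `P b`, and `act b i j e` by an exponent `e ≤ j i` of the variable `i`. -/
inductive Letter : Type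
  | start
  | start'
  | marker
  | seed (b : Bool)
  | fresh (b : Bool) (i : Fin t) (j : (P b).support)
  | act (b : Bool) (i : Fin t) (j : (P b).support) (e : Fin ((j : Fin t →₀ ℕ) i + 1))
  | dead (b : Bool)
  | accept

namespace Letter

variable {P}

def decode :
    Fin 4 ⊕ Bool × Bool ⊕ (Σ b, Fin t × (P b).support) ⊕
      (Σ b, Σ i : Fin t, Σ j : (P b).support, Fin ((j : Fin t →₀ ℕ) i + 1)) → Letter P
  | .inl k => ![start, start', marker, accept] k
  | .inr (.inl (b, false)) => seed b
  | .inr (.inl (b, true)) => dead b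
  | .inr (.inr (.inl ⟨b, i, j⟩)) => fresh b i j
  | .inr (.inr (.inr ⟨b, i, j, e⟩)) => act b i j e

instance : Finite (Letter P) :=
  Finite.of_surjective decode fun
    | start => ⟨.inl 0, rfl⟩
    | start' => ⟨.inl 1, rfl⟩
    | marker => ⟨.inl 2, rfl⟩
    | accept => ⟨.inl 3, rfl⟩
    | seed b => ⟨.inr (.inl (b, false)), rfl⟩
    | dead b => ⟨.inr (.inl (b, true)), rfl⟩
    | fresh b i j => ⟨.inr (.inr (.inl ⟨b, i, j⟩)), rfl⟩
    | act b i j e => ⟨.inr (.inr (.inr ⟨b, i, j, e⟩)), rfl⟩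

def owner : Letter P → Option Bool
  | fresh b _ _ | act b _ _ _ | dead b => some b
  | _ => none

def rank : Letter P → ℕ ×ₗ ℕ
  | start => toLex (0, 0)
  | start' => toLex (1, 0)
  | marker => toLex (2, 0)
  | seed b => toLex (3 + b.toNat, 0)
  | fresh _ i _ => toLex (5 + i, 0)
  | act _ i _ e => toLex (5 + i, e + 1)
  | dead _ | accept => toLex (5 + t, 0)

end Letter

open Letter

noncomputable def runVec (b : Bool) (i : Fin t) (v : List ℕ) (x : ℕ) : Multiset (Letter P) :=
  ∑ j : (P b).support, ∑ e : Fin ((j : Fin t →₀ ℕ) i + 1),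
    (coeff (j : Fin t →₀ ℕ) (P b) * monomialEval (j : Fin t →₀ ℕ) (valuation v) * x ^ (e : ℕ)) •
      {act b i j e}

noncomputable def freshVec (b : Bool) (i : Fin t) (v : List ℕ) : Multiset (Letter P) :=
  ∑ j : (P b).support,
    (coeff (j : Fin t →₀ ℕ) (P b) * monomialEval (j : Fin t →₀ ℕ) (valuation v)) • {fresh b i j}

def Realizes (b : Bool) (m : Multiset (Letter P)) : State t → Prop
  | .run i v x => m = runVec P b i v x
  | .fresh i v => m = freshVec P b i v
  | .done v => m = eval (valuation v) (P b) • {accept}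
  | .dead => ∃ K, 0 < K ∧ m = K • {dead b}

variable {P}

lemma mem_runVec {b : Bool} {i : Fin t} {v : List ℕ} {x : ℕ} {a : Letter P}
    (ha : a ∈ runVec P b i v x) : ∃ j e, a = act b i j e := by
  simp only [runVec, Multiset.mem_sum, Multiset.mem_nsmul, Multiset.mem_singleton] at ha
  obtain ⟨j, -, e, -, -, rfl⟩ := ha
  exact ⟨j, e, rfl⟩

lemma mem_freshVec {b : Bool} {i : Fin t} {v : List ℕ} {a : Letter P}
    (ha : a ∈ freshVec P b i v) : ∃ j, a = fresh b i j := by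
  simp only [freshVec, Multiset.mem_sum, Multiset.mem_nsmul, Multiset.mem_singleton] at ha
  obtain ⟨j, -, -, rfl⟩ := ha
  exact ⟨j, rfl⟩

lemma Realizes.owner_eq {b : Bool} {m : Multiset (Letter P)} {σ : State t}
    (h : Realizes P b m σ) {a : Letter P} (ha : a ∈ m) : a.owner = some b ∨ a = accept := by
  cases σ with
  | run i v x =>
    obtain ⟨j, e, rfl⟩ := mem_runVec (show a ∈ runVec P b i v x from h ▸ ha)
    exact Or.inl rfl
  | fresh i v =>
    obtain ⟨j, rfl⟩ := mem_freshVec (show a ∈ freshVec P b i v from h ▸ ha)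
    exact Or.inl rfl
  | done v =>
    rw [show m = _ from h, Multiset.mem_nsmul, Multiset.mem_singleton] at ha
    exact Or.inr ha.2
  | dead =>
    obtain ⟨K, -, rfl⟩ := h
    rw [Multiset.mem_nsmul, Multiset.mem_singleton] at ha
    rw [ha.2]
    exact Or.inl rfl

lemma Realizes.exists_owner_eq {b : Bool} (hP : P b ≠ 0) {m : Multiset (Letter P)}
    {σ : State t} (h : Realizes P b m σ) (hσ : σ.Valid) (hσd : ∀ v, σ ≠ .done v) :
    ∃ a ∈ m, a.owner = some b := by
  obtain ⟨d, hd⟩ := support_nonempty.2 hP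
  let j : (P b).support := ⟨d, hd⟩
  have hj : 0 < coeff (j : Fin t →₀ ℕ) (P b) := coeff_pos j
  cases σ with
  | run i v x =>
    refine ⟨act b i j 0, ?_, rfl⟩
    rw [show m = _ from h, runVec]
    refine Multiset.mem_sum.2 ⟨j, Finset.mem_univ _, Multiset.mem_sum.2 ⟨0, Finset.mem_univ _, ?_⟩⟩
    exact Multiset.mem_nsmul.2
      ⟨by simpa using ⟨hj.ne', (monomialEval_pos _ hσ.2.1).ne'⟩, Multiset.mem_singleton_self _⟩
  | fresh i v =>
    refine ⟨fresh b i j, ?_, rfl⟩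
    rw [show m = _ from h, freshVec]
    refine Multiset.mem_sum.2 ⟨j, Finset.mem_univ _, ?_⟩
    exact Multiset.mem_nsmul.2
      ⟨by simpa using ⟨hj.ne', (monomialEval_pos _ hσ.2).ne'⟩, Multiset.mem_singleton_self _⟩
  | done v => exact absurd rfl (hσd v)
  | dead =>
    obtain ⟨K, hK, rfl⟩ := h
    exact ⟨dead b, Multiset.mem_nsmul.2 ⟨hK.ne', Multiset.mem_singleton_self _⟩, rfl⟩

lemma Realizes.exists_eq_done {b b' : Bool} (hb : b ≠ b') (hP : P b ≠ 0)
    {m : Multiset (Letter P)} {σ σ' : State t} (h : Realizes P b m σ) (hσ : σ.Valid)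
    (h' : Realizes P b' m σ') : ∃ v, σ = .done v := by
  by_contra! hσd
  obtain ⟨a, ha, hab⟩ := h.exists_owner_eq hP hσ hσd
  rcases h'.owner_eq ha with hab' | rfl
  · exact hb (Option.some_injective _ (hab.symm.trans hab'))
  · cases hab

def nextLetter {b : Bool} (i : Fin t) (j : (P b).support) : Letter P :=
  if h : (i : ℕ) + 1 < t then fresh b ⟨i + 1, h⟩ j else accept

variable (P)

def g₂Image : Letter P → FreeMonoid (Letter P)
  | start => of start'
  | start' => of marker * of (seed false)
  | seed _ => of (seed true)
  | fresh b _ _ => of (dead b)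
  | act _ i j e => if e = Fin.last _ then of (nextLetter i j) else 1
  | a => of a

def g₂ : Monoid.End (FreeMonoid (Letter P)) := FreeMonoid.lift (g₂Image P)

variable {P}

@[simp] lemma g₂_of (a : Letter P) : g₂ P (of a) = g₂Image P a := lift_eval_of _ a

lemma isUpperTriangularBy_g₂ : IsUpperTriangularBy rank (g₂ P) := by
  intro a x hx
  cases a with
  | seed b => cases b <;> simp_all [g₂Image, rank, Prod.Lex.toLex_lt_toLex]
  | start' =>
    rcases (by simpa [g₂Image] using hx : x = marker ∨ x = seed false) with rfl | rfl <;>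
      simp [rank, Prod.Lex.toLex_lt_toLex]
  | act b i j e =>
    simp only [g₂_of, g₂Image, nextLetter] at hx
    split_ifs at hx
    · obtain rfl := List.mem_singleton.1 hx
      simp [rank, Prod.Lex.toLex_lt_toLex]
    · obtain rfl := List.mem_singleton.1 hx
      simp [rank, Prod.Lex.toLex_lt_toLex]
    · simp at hx
  | _ => simp_all [g₂Image, rank, Prod.Lex.toLex_lt_toLex]

lemma g₂_sq_start : (g₂ P ^ 2) (of start) = of marker * of (seed false) := by
  simp [pow_two, g₂Image]

lemma g₂_pow_three_start : (g₂ P ^ 3) (of start) = of marker * of (seed true) := by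
  simp [pow_succ, g₂Image]

lemma g₂_pow_seed_true (k : ℕ) : (g₂ P ^ k) (of (seed true)) = of (seed true) := by
  induction k with
  | zero => rfl
  | succ k ih => rw [pow_succ, Monoid.End.coe_mul, Function.comp_apply, g₂_of]; exact ih

lemma g₂_pow_three_of {a : Letter P} (ha : a ≠ start) :
    (g₂ P ^ 3) (of a) = (g₂ P ^ 2) (of a) := by
  cases a with
  | start => exact absurd rfl ha
  | act b i j e =>
    simp only [pow_succ, pow_zero, one_mul, Monoid.End.coe_mul, Function.comp_apply, g₂_of,
      g₂Image, nextLetter]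
    split_ifs <;> simp [g₂Image]
  | _ => simp [pow_succ, g₂Image]

lemma parikhMap_g₂_runVec (b : Bool) {i : Fin t} {v : List ℕ} (hv : v.length = i) (x : ℕ) :
    parikhMap (g₂ P) (runVec P b i v x) =
      if h : (i : ℕ) + 1 < t then freshVec P b ⟨i + 1, h⟩ (v ++ [x])
      else eval (valuation (v ++ [x])) (P b) • {accept} := by
  have key : parikhMap (g₂ P) (runVec P b i v x) = ∑ j : (P b).support,
      (coeff (j : Fin t →₀ ℕ) (P b) * monomialEval (j : Fin t →₀ ℕ) (valuation (v ++ [x]))) •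
        {nextLetter i j} := by
    simp only [runVec, map_sum, map_nsmul, parikhMap_singleton, g₂_of, g₂Image,
      apply_ite parikh, parikh_of, parikh_one, smul_ite, smul_zero, Finset.sum_ite_eq',
      Finset.mem_univ, if_true]
    refine Finset.sum_congr rfl fun j _ => ?_
    rw [monomialEval_valuation_append_singleton _ hv, Fin.val_last, mul_assoc]
  rw [key]
  unfold nextLetter
  split_ifs
  · rfl
  · rw [← Finset.sum_smul, eval_eq_sum_support]

lemma parikhMap_g₂_freshVec (b : Bool) (i : Fin t) (v : List ℕ) :
    parikhMap (g₂ P) (freshVec P b i v) = eval (valuation v) (P b) • {dead b} := by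
  simp [freshVec, map_sum, map_nsmul, g₂Image, ← Finset.sum_smul, eval_eq_sum_support]

lemma Realizes.g₂ {b : Bool} (hP : P b ≠ 0) {m : Multiset (Letter P)} {σ : State t}
    (h : Realizes P b m σ) (hσ : σ.Valid) : Realizes P b (parikhMap (g₂ P) m) σ.advance := by
  cases σ with
  | run i v x =>
    rw [show m = _ from h, parikhMap_g₂_runVec b hσ.1, State.advance]
    split_ifs <;> rfl
  | fresh i v =>
    exact ⟨_, eval_valuation_pos hP hσ.2, by rw [show m = _ from h, parikhMap_g₂_freshVec]⟩
  | done v =>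
    rw [show m = _ from h]
    simp [State.advance, Realizes, g₂Image]
  | dead =>
    obtain ⟨K, hK, rfl⟩ := h
    exact ⟨K, hK, by simp [g₂Image]⟩

variable (P) [NeZero t]

noncomputable def g₁Image : Letter P → FreeMonoid (Letter P)
  | seed b => ofMultiset (runVec P b 0 [] 1)
  | fresh b i j => ofMultiset (∑ e, {act b i j e})
  | act b i j e => ofMultiset (∑ e' : Fin (_ + 1), ((e' : ℕ).choose e) • {act b i j e'})
  | a => of a

noncomputable def g₁ : Monoid.End (FreeMonoid (Letter P)) := FreeMonoid.lift (g₁Image P)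

variable {P}

@[simp] lemma g₁_of (a : Letter P) : g₁ P (of a) = g₁Image P a := lift_eval_of _ a

lemma isUpperTriangularBy_g₁ : IsUpperTriangularBy rank (g₁ P) := by
  intro a x hx
  cases a with
  | seed b =>
    obtain ⟨j, e, rfl⟩ := mem_runVec (by simpa [g₁Image, mem_toList_ofMultiset] using hx)
    right
    cases b <;> simp [rank, Prod.Lex.toLex_lt_toLex]
  | fresh b i j =>
    obtain ⟨e, rfl⟩ : ∃ e, x = act b i j e := by
      simpa [g₁Image, mem_toList_ofMultiset, Multiset.mem_sum] using hx
    simp [rank, Prod.Lex.toLex_lt_toLex]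
  | act b i j e =>
    obtain ⟨e', he', rfl⟩ : ∃ e' : Fin (_ + 1), ¬(e' : ℕ).choose e = 0 ∧ x = act b i j e' := by
      simpa [g₁Image, mem_toList_ofMultiset, Multiset.mem_sum, Multiset.mem_nsmul] using hx
    rcases (le_of_not_gt (mt Nat.choose_eq_zero_of_lt he')).eq_or_lt with h | h
    · exact Or.inl (by rw [Fin.val_inj.1 h])
    · exact Or.inr (by simpa [rank, Prod.Lex.toLex_lt_toLex] using h)
  | _ => simp_all [g₁Image]

lemma parikhMap_g₁_runVec (b : Bool) (i : Fin t) (v : List ℕ) (x : ℕ) :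
    parikhMap (g₁ P) (runVec P b i v x) = runVec P b i v (x + 1) := by
  simp only [runVec, map_sum, map_nsmul, parikhMap_singleton, g₁_of, g₁Image, parikh_ofMultiset,
    Finset.smul_sum, smul_smul]
  refine Finset.sum_congr rfl fun j _ => ?_
  rw [Finset.sum_comm]
  refine Finset.sum_congr rfl fun e' _ => ?_
  rw [← Finset.sum_smul, ← sum_pow_mul_choose x _ e' (Nat.lt_succ_iff.1 e'.2), Finset.mul_sum]
  simp only [mul_assoc]

lemma parikhMap_g₁_freshVec (b : Bool) (i : Fin t) (v : List ℕ) :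
    parikhMap (g₁ P) (freshVec P b i v) = runVec P b i v 1 := by
  simp [freshVec, runVec, map_sum, map_nsmul, g₁Image, Finset.smul_sum]

lemma Realizes.g₁ {b : Bool} {m : Multiset (Letter P)} {σ : State t} (h : Realizes P b m σ) :
    Realizes P b (parikhMap (g₁ P) m) σ.incr := by
  cases σ with
  | run i v x => rw [show m = _ from h, parikhMap_g₁_runVec]; rfl
  | fresh i v => rw [show m = _ from h, parikhMap_g₁_freshVec]; rfl
  | done v =>
    rw [show m = _ from h]
    simp [State.incr, Realizes, g₁Image]
  | dead =>
    obtain ⟨K, hK, rfl⟩ := h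
    exact ⟨K, hK, by simp [g₁Image]⟩

lemma realizes_g₁_pow_run {b : Bool} {i : Fin t} {v : List ℕ} {x : ℕ}
    {w : FreeMonoid (Letter P)} (h : Realizes P b (parikh w) (.run i v x)) (k : ℕ) :
    Realizes P b (parikh ((g₁ P ^ k) w)) (.run i v (x + k)) := by
  induction k with
  | zero => exact h
  | succ k ih =>
    rw [pow_succ', Monoid.End.coe_mul, Function.comp_apply, parikh_apply]
    exact ih.g₁

lemma realizes_g₁_pow_fresh {b : Bool} {i : Fin t} {v : List ℕ} {w : FreeMonoid (Letter P)}
    (h : Realizes P b (parikh w) (.fresh i v)) {k : ℕ} (hk : 0 < k) :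
    Realizes P b (parikh ((g₁ P ^ k) w)) (.run i v k) := by
  obtain ⟨k, rfl⟩ := Nat.exists_eq_succ_of_ne_zero hk.ne'
  rw [pow_succ, Monoid.End.coe_mul, Function.comp_apply, Nat.succ_eq_one_add]
  have h₁ := h.g₁
  rw [← parikh_apply] at h₁
  exact realizes_g₁_pow_run h₁ k

lemma realizes_g₁_pow_seed (b : Bool) {n : ℕ} (hn : 0 < n) :
    Realizes P b (parikh ((g₁ P ^ n) (of (seed b)))) (.run 0 [] n) := by
  obtain ⟨n, rfl⟩ := Nat.exists_eq_succ_of_ne_zero hn.ne'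
  rw [pow_succ, Monoid.End.coe_mul, Function.comp_apply, Nat.succ_eq_one_add]
  exact realizes_g₁_pow_run (by simp [Realizes, g₁Image]) n

variable (P) in
/-- The paper's `Prod(a, r) = g₁^a g₂ Prod(r)`, with endomorphisms composed as in `Monoid.End`. -/
noncomputable def prodWord : List ℕ → Monoid.End (FreeMonoid (Letter P))
  | [] => 1
  | a :: r => prodWord r * g₂ P * g₁ P ^ a

lemma prodWord_append (l l' : List ℕ) : prodWord P (l ++ l') = prodWord P l' * prodWord P l := by
  induction l with
  | nil => simp [prodWord]
  | cons a l ih => simp [prodWord, ih, mul_assoc]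

lemma g₁_mem_closure : g₁ P ∈ Submonoid.closure {g₁ P, g₂ P} := Submonoid.subset_closure (by simp)

lemma g₂_mem_closure : g₂ P ∈ Submonoid.closure {g₁ P, g₂ P} := Submonoid.subset_closure (by simp)

lemma prodWord_mem_closure (r : List ℕ) : prodWord P r ∈ Submonoid.closure {g₁ P, g₂ P} := by
  induction r with
  | nil => exact Submonoid.one_mem _
  | cons a r ih =>
    exact Submonoid.mul_mem _ (Submonoid.mul_mem _ ih g₂_mem_closure)
      (Submonoid.pow_mem _ g₁_mem_closure a)

lemma apply_marker_of_mem_closure {h : Monoid.End (FreeMonoid (Letter P))}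
    (hh : h ∈ Submonoid.closure {g₁ P, g₂ P}) : h (of marker) = of marker := by
  induction hh using Submonoid.closure_induction with
  | mem x hx => rcases hx with rfl | rfl <;> simp [g₁Image, g₂Image]
  | one => rfl
  | mul x y _ _ hx hy => rw [Monoid.End.coe_mul, Function.comp_apply, hy, hx]

lemma mul_prodWord_mul_apply_start {h : Monoid.End (FreeMonoid (Letter P))}
    (hh : h ∈ Submonoid.closure {g₁ P, g₂ P}) (r : List ℕ) {k : ℕ} {b : Bool}
    (hk : (g₂ P ^ k) (of start) = of marker * of (seed b)) :
    (h * (prodWord P r * g₂ P ^ k)) (of start) = of marker * h (prodWord P r (of (seed b))) := by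
  have := apply_marker_of_mem_closure (Submonoid.mul_mem _ hh (prodWord_mem_closure r))
  rw [Monoid.End.coe_mul, Function.comp_apply] at this
  rw [Monoid.End.coe_mul, Monoid.End.coe_mul, Function.comp_apply, Function.comp_apply, hk,
    map_mul, map_mul, this]

lemma realizes_prodWord {b : Bool} (hP : P b ≠ 0) :
    ∀ (r : List ℕ) {i : Fin t} {v : List ℕ} {x : ℕ} {w : FreeMonoid (Letter P)},
      Realizes P b (parikh w) (.run i v x) → (State.run i v x).Valid →
      (i : ℕ) + 1 + r.length = t → (∀ a ∈ r, 0 < a) →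
      Realizes P b (parikh ((prodWord P r * g₂ P) w)) (.done (v ++ x :: r))
  | [], i, v, x, w, h, hσ, hlen, _ => by
    have := h.g₂ hP hσ
    rw [← parikh_apply] at this
    simpa [State.advance, show ¬((i : ℕ) + 1 < t) by simp at hlen; omega, prodWord] using this
  | a :: r, i, v, x, w, h, hσ, hlen, hr => by
    have hi : (i : ℕ) + 1 < t := by simp at hlen; omega
    have h₁ := h.g₂ hP hσ
    rw [← parikh_apply] at h₁
    have h₂ := realizes_g₁_pow_fresh (by simpa [State.advance, hi] using h₁)
      (hr a List.mem_cons_self)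
    have hσ₂ : (State.run ⟨i + 1, hi⟩ (v ++ [x]) a).Valid :=
      ⟨by simp [hσ.1], by simpa [or_imp, forall_and] using ⟨hσ.2.1, hσ.2.2⟩,
        hr a List.mem_cons_self⟩
    have := realizes_prodWord hP r h₂ hσ₂ (by simp at hlen ⊢; omega)
      fun c hc => hr c (List.mem_cons_of_mem _ hc)
    rwa [List.append_assoc, List.singleton_append] at this

lemma realizes_prodWord_pair (hP : ∀ b, P b ≠ 0) (ht : 1 < t) {n s : ℕ} (hn : 0 < n)
    (hs : 0 < s) (b : Bool) :
    Realizes P b (parikh (prodWord P [n, s] (of (seed b)))) (State.run ⟨1, ht⟩ [n] s).advance := by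
  have h₁ := (realizes_g₁_pow_seed b hn).g₂ (hP b) ⟨by simp, by simp, hn⟩
  rw [← parikh_apply] at h₁
  have h₂ := (realizes_g₁_pow_fresh (by simpa [State.advance, ht] using h₁) hs).g₂ (hP b)
    ⟨rfl, by simpa using hn, hs⟩
  rw [← parikh_apply] at h₂
  exact h₂

lemma exists_realizes_of_mem_closure (hP : ∀ b, P b ≠ 0) (ht : 1 < t) {n s : ℕ} (hn : 0 < n)
    (hs : 0 < s) {h : Monoid.End (FreeMonoid (Letter P))}
    (hh : h ∈ Submonoid.closure {g₁ P, g₂ P}) :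
    ∃ σ : State t, σ.Valid ∧ σ.Extends [n, s] ∧
      ∀ b, Realizes P b (parikh (h (prodWord P [n, s] (of (seed b))))) σ := by
  induction hh using Submonoid.closure_induction_left with
  | one =>
    have hσ : (State.run ⟨1, ht⟩ [n] s).Valid := ⟨rfl, by simpa using hn, hs⟩
    refine ⟨_, hσ.advance, ?_, realizes_prodWord_pair hP ht hn hs⟩
    dsimp only [State.advance]
    split_ifs <;> exact List.prefix_refl _
  | mul_left x hx y _ ih =>
    obtain ⟨σ, hσ, hext, hr⟩ := ih
    rcases hx with rfl | rfl
    · refine ⟨σ.incr, hσ.incr, hext.incr, fun b => ?_⟩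
      rw [Monoid.End.coe_mul, Function.comp_apply, parikh_apply]
      exact (hr b).g₁
    · refine ⟨σ.advance, hσ.advance, hext.advance, fun b => ?_⟩
      rw [Monoid.End.coe_mul, Function.comp_apply, parikh_apply]
      exact (hr b).g₂ (hP b) hσ

lemma exists_solution (hP : ∀ b, P b ≠ 0) (ht : 2 ≤ t) {n s : ℕ} (hs : 0 < s) (m : Fin t → ℕ)
    (hm : ∀ i, 0 < m i) (hm₀ : m ⟨0, by omega⟩ = n) (hm₁ : m ⟨1, by omega⟩ = s)
    (heval : eval m (P false) = eval m (P true)) :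
    ∃ h ∈ Submonoid.closure {g₁ P, g₂ P},
      h * (prodWord P [n, s] * g₂ P ^ 2) = h * (prodWord P [n, s] * g₂ P ^ 3) := by
  have hn : 0 < n := hm₀ ▸ hm _
  let r := List.ofFn fun k : Fin (t - 2) => m ⟨k + 2, by omega⟩
  have hval : valuation (n :: s :: r) = m := by
    funext ⟨i, hi⟩
    match i with
    | 0 => exact hm₀.symm
    | 1 => exact hm₁.symm
    | k + 2 =>
      simp only [valuation, List.getD_cons_succ]
      rw [List.getD_eq_getElem _ _ (by simp [r]; omega), List.getElem_ofFn]
  have key (b : Bool) :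
      prodWord P r (prodWord P [n, s] (of (seed b))) = of accept ^ eval m (P b) := by
    have := realizes_prodWord (hP b) (s :: r) (realizes_g₁_pow_seed b hn) ⟨by simp, by simp, hn⟩
      (by simp [r]; omega) (by simp [r, List.mem_ofFn, hs, hm])
    change (prodWord P r * prodWord P [n, s]) _ = _
    rw [← prodWord_append, ← hval]
    exact eq_pow_of_parikh_eq this
  refine ⟨prodWord P r, prodWord_mem_closure r, end_ext fun a => ?_⟩
  by_cases ha : a = start
  · rw [ha, mul_prodWord_mul_apply_start (prodWord_mem_closure r) _ g₂_sq_start,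
      mul_prodWord_mul_apply_start (prodWord_mem_closure r) _ g₂_pow_three_start, key, key, heval]
  · change prodWord P r (prodWord P [n, s] ((g₂ P ^ 2) (of a))) =
      prodWord P r (prodWord P [n, s] ((g₂ P ^ 3) (of a)))
    rw [g₂_pow_three_of ha]

lemma exists_solution_of_eq (hP : ∀ b, P b ≠ 0) (ht : 2 ≤ t) {n s : ℕ} (hn : 0 < n) (hs : 0 < s)
    {h₁ h₂ : Monoid.End (FreeMonoid (Letter P))} (hh₁ : h₁ ∈ Submonoid.closure {g₁ P, g₂ P})
    (hh₂ : h₂ ∈ Submonoid.closure {g₁ P, g₂ P})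
    (heq : h₁ * (prodWord P [n, s] * g₂ P ^ 2) = h₂ * (prodWord P [n, s] * g₂ P ^ 3)) :
    ∃ m : Fin t → ℕ, (∀ i, 0 < m i) ∧ m ⟨0, by omega⟩ = n ∧ m ⟨1, by omega⟩ = s ∧
      eval m (P false) = eval m (P true) := by
  set u : Bool → FreeMonoid (Letter P) := fun b => prodWord P [n, s] (of (seed b))
  have e₁ : h₁ (u false) = h₂ (u true) := by
    have := congrArg (· (of start)) heq
    simp only [mul_prodWord_mul_apply_start hh₁ _ g₂_sq_start,
      mul_prodWord_mul_apply_start hh₂ _ g₂_pow_three_start] at this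
    exact mul_left_cancel this
  have e₂ : h₁ (u true) = h₂ (u true) := by
    have : h₁ (prodWord P [n, s] ((g₂ P ^ 2) (of (seed true)))) =
        h₂ (prodWord P [n, s] ((g₂ P ^ 3) (of (seed true)))) := congrArg (· (of (seed true))) heq
    rwa [g₂_pow_seed_true, g₂_pow_seed_true] at this
  obtain ⟨σ₁, hσ₁, hext, hr₁⟩ := exists_realizes_of_mem_closure hP (by omega) hn hs hh₁
  obtain ⟨σ₂, hσ₂, -, hr₂⟩ := exists_realizes_of_mem_closure hP (by omega) hn hs hh₂
  obtain ⟨v₁, rfl⟩ := (hr₁ false).exists_eq_done Bool.false_ne_true (hP false) hσ₁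
    (by rw [e₁]; exact hr₂ true)
  obtain ⟨v₂, rfl⟩ := (hr₂ true).exists_eq_done Bool.false_ne_true.symm (hP true) hσ₂
    (by rw [← e₁]; exact hr₁ false)
  have nsmul_inj {x y : ℕ} (h : (x • {accept} : Multiset (Letter P)) = y • {accept}) : x = y :=
    Multiset.replicate_left_injective accept (by simpa only [Multiset.nsmul_singleton] using h)
  have hpq := nsmul_inj ((hr₁ false).symm.trans ((congrArg parikh e₁).trans (hr₂ true)))
  have hqq := nsmul_inj ((hr₁ true).symm.trans ((congrArg parikh e₂).trans (hr₂ true)))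
  obtain ⟨r, rfl⟩ := hext
  exact ⟨valuation ([n, s] ++ r), valuation_pos hσ₁.2, rfl, rfl, hpq.trans hqq.symm⟩

theorem equationCriterion (hP : ∀ b, P b ≠ 0) (ht : 2 ≤ t) {n s : ℕ} (hn : 0 < n) (hs : 0 < s) :
    EquationCriterion
      (∃ m : Fin t → ℕ, (∀ i, 0 < m i) ∧ m ⟨0, by omega⟩ = n ∧ m ⟨1, by omega⟩ = s ∧
        eval m (P false) = eval m (P true))
      (Submonoid.closure {g₁ P, g₂ P}) (oEnd _)
      (prodWord P [n, s] * g₂ P ^ 2) (prodWord P [n, s] * g₂ P ^ 3) := by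
  refine ⟨fun ⟨m, hm, hm₀, hm₁, heval⟩ => exists_solution hP ht hs m hm hm₀ hm₁ heval,
    fun h hh he => ?_, fun h₁ hh₁ h₂ hh₂ he => exists_solution_of_eq hP ht hn hs hh₁ hh₂ he⟩
  have := congrArg (· (of start)) he
  simp only [mul_prodWord_mul_apply_start hh _ g₂_sq_start, oEnd_apply] at this
  simpa using congrArg FreeMonoid.length this

end Encoding

/-- The paper applies endomorphisms on the right, so its product `fg` (apply `f` first) is
`g * f` in `Monoid.End`: `g2² g1^n g2 g1^s g2` is `g2 * g1 ^ s * g2 * g1 ^ n * g2 ^ 2`. -/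
theorem statement5 (t : ℕ) (ht : 2 ≤ t) (p q : MvPolynomial (Fin t) ℕ)
    (hp : ∀ m : Fin t → ℕ, (∀ i, 0 < m i) → 0 < MvPolynomial.eval m p)
    (hq : ∀ m : Fin t → ℕ, (∀ i, 0 < m i) → 0 < MvPolynomial.eval m q) :
    ∃ (k : ℕ) (g1 g2 : Monoid.End (FreeMonoid (Fin k))),
      0 < k ∧ IsUpperTriangular g1 ∧ IsUpperTriangular g2 ∧
      ∀ n s : ℕ, 0 < n → 0 < s →
        (((∃ m : Fin t → ℕ, (∀ i, 0 < m i) ∧ m ⟨0, by omega⟩ = n ∧ m ⟨1, by omega⟩ = s ∧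
              MvPolynomial.eval m p = MvPolynomial.eval m q) ↔
            (∃ h ∈ Submonoid.closure ({g1, g2} : Set (Monoid.End (FreeMonoid (Fin k)))),
              h * (g2 * g1 ^ s * g2 * g1 ^ n * g2 ^ 2) =
                h * (g2 * g1 ^ s * g2 * g1 ^ n * g2 ^ 3) ∧
              h * (g2 * g1 ^ s * g2 * g1 ^ n * g2 ^ 2) ≠ oEnd (Fin k))) ∧
          ((∃ h ∈ Submonoid.closure ({g1, g2} : Set (Monoid.End (FreeMonoid (Fin k)))),
              h * (g2 * g1 ^ s * g2 * g1 ^ n * g2 ^ 2) =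
                h * (g2 * g1 ^ s * g2 * g1 ^ n * g2 ^ 3) ∧
              h * (g2 * g1 ^ s * g2 * g1 ^ n * g2 ^ 2) ≠ oEnd (Fin k)) ↔
            (∃ h1 ∈ Submonoid.closure ({g1, g2} : Set (Monoid.End (FreeMonoid (Fin k)))),
              ∃ h2 ∈ Submonoid.closure ({g1, g2} : Set (Monoid.End (FreeMonoid (Fin k)))),
              h1 * (g2 * g1 ^ s * g2 * g1 ^ n * g2 ^ 2) =
                h2 * (g2 * g1 ^ s * g2 * g1 ^ n * g2 ^ 3) ∧
              h1 * (g2 * g1 ^ s * g2 * g1 ^ n * g2 ^ 2) ≠ oEnd (Fin k)))) := by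
  have : NeZero t := ⟨by omega⟩
  let P : Bool → MvPolynomial (Fin t) ℕ := fun b => cond b q p
  have hP : ∀ b, P b ≠ 0 := by
    rintro (_ | _) h
    · simpa [show p = 0 from h] using hp 1 fun _ => one_pos
    · simpa [show q = 0 from h] using hq 1 fun _ => one_pos
  obtain ⟨k, e, he⟩ := exists_equiv_fin_of_rank (Encoding.Letter.rank (P := P))
  refine ⟨k, FreeMonoid.endCongr e (Encoding.g₁ P), FreeMonoid.endCongr e (Encoding.g₂ P),
    Fin.pos (e .start), Encoding.isUpperTriangularBy_g₁.endCongr he,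
    Encoding.isUpperTriangularBy_g₂.endCongr he, fun n s hn hs => ?_⟩
  have := (Encoding.equationCriterion hP ht hn hs).map (FreeMonoid.endCongr e)
  simp only [MonoidHom.map_mclosure, Set.image_pair, FreeMonoid.endCongr_oEnd,
    Encoding.prodWord, one_mul, map_mul, map_pow] at this
  exact this.iff
end
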